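/- arXiv:1611.05590 — 2 statements merged into one kernel-verified Lean document; each statement's English description precedes it below -/
import Mathlib

section
/- Let λ > 0 and K be a positive integer. Define P(ξ) = (1/2)[1 + erf((ξ - 0.5 - λ)/√(2λ))]. Then the function ξ ↦ P(ξ)^K is convex on the interval ξ ≤ λ + 0.5. -/
/-- The Gauss error function `erf z = (2/√π) ∫_0^z e^{-t²} dt`. -/
noncomputable def erf (z : ℝ) : ℝ := (2 / Real.sqrt Real.pi) * ∫ t in (0:ℝ)..z, Real.exp (-t ^ 2)

/-!
`erf` is convex on `(-∞, 0]` because its derivative `(2/√π) e^{-z²}` increases there, and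
`erf ≥ -1` because `∫_0^z e^{-t²} dt ≥ -∫_{-∞}^0 e^{-t²} dt = -√π/2`. Hence the Gaussian
approximation `P(ξ) = (1 + erf ((ξ - c)/σ))/2`, an affine reparametrisation of `erf` followed by
an increasing affine map, is convex and nonnegative on `(-∞, c]`, and so is every power of it.
-/

open MeasureTheory Set Real

lemma erf_hasDerivAt (z : ℝ) : HasDerivAt erf (2 / √π * exp (-z ^ 2)) z := by
  have hc : Continuous fun t : ℝ => exp (-t ^ 2) := by fun_prop
  exact (intervalIntegral.integral_hasDerivAt_right (hc.intervalIntegrable 0 z)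
    (hc.stronglyMeasurableAtFilter _ _) hc.continuousAt).const_mul _

lemma erf_convexOn_Iic : ConvexOn ℝ (Iic 0) erf := by
  refine MonotoneOn.convexOn_of_deriv (convex_Iic 0)
    (fun z _ => (erf_hasDerivAt z).continuousAt.continuousWithinAt)
    (fun z _ => (erf_hasDerivAt z).differentiableAt.differentiableWithinAt) ?_
  intro x hx y hy hxy
  rw [interior_Iic] at hx hy
  simp only [(erf_hasDerivAt _).deriv]
  exact mul_le_mul_of_nonneg_left (exp_le_exp.2 (by nlinarith [mem_Iio.1 hy])) (by positivity)

lemma integrableOn_exp_neg_sq (s : Set ℝ) : IntegrableOn (fun x : ℝ => exp (-x ^ 2)) s := by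
  simpa using (integrable_exp_neg_mul_sq one_pos).integrableOn (s := s)

lemma integral_Iic_zero_exp_neg_sq : ∫ x in Iic (0:ℝ), exp (-x ^ 2) = √π / 2 := by
  have h := integral_comp_neg_Ioi (0:ℝ) (fun x : ℝ => exp (-x ^ 2))
  simp only [neg_zero, even_two, Even.neg_pow] at h
  simpa [h] using integral_gaussian_Ioi 1

lemma neg_one_le_erf (z : ℝ) : -1 ≤ erf z := by
  have htail : 0 ≤ ∫ x in Iic z, exp (-x ^ 2) :=
    setIntegral_nonneg measurableSet_Iic fun _ _ => (exp_pos _).le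
  have hnorm : 2 / √π * (√π / 2) = 1 := by field_simp
  rw [erf, ← intervalIntegral.integral_Iic_sub_Iic (integrableOn_exp_neg_sq _)
    (integrableOn_exp_neg_sq _), integral_Iic_zero_exp_neg_sq, mul_sub, hnorm]
  linarith [mul_nonneg (by positivity : (0:ℝ) ≤ 2 / √π) htail]

lemma ConvexOn.comp_sub_div_Iic {f : ℝ → ℝ} (hf : ConvexOn ℝ (Iic 0) f) (c : ℝ) {a : ℝ}
    (ha : 0 < a) : ConvexOn ℝ (Iic c) fun x => f ((x - c) / a) := by
  set g := a⁻¹ • (AffineMap.id ℝ ℝ - AffineMap.const ℝ ℝ c)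
  have hg : ⇑g = fun x => (x - c) / a := by ext x; simp [g, div_eq_inv_mul]
  have hpre : g ⁻¹' Iic 0 = Iic c := by ext x; simp [hg, div_nonpos_iff, ha.le, ha.not_ge]
  have h := hf.comp_affineMap g
  rwa [hpre, hg] at h

theorem Pmd_pow_convex_general (lam : ℝ) (hlam : 0 < lam) (K : ℕ) :
    ConvexOn ℝ (Set.Iic (lam + 0.5))
      (fun ξ : ℝ => ((1 / 2) * (1 + erf ((ξ - 0.5 - lam) / Real.sqrt (2 * lam)))) ^ K) := by
  have hσ : 0 < √(2 * lam) := by positivity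
  have hP : ConvexOn ℝ (Iic (lam + 0.5))
      fun ξ => (1 / 2 : ℝ) * (1 + erf ((ξ - 0.5 - lam) / √(2 * lam))) := by
    simp only [sub_sub, ← smul_eq_mul, add_comm _ (erf _)]
    rw [add_comm lam]
    exact ((erf_convexOn_Iic.comp_sub_div_Iic _ hσ).add_const 1).smul (by norm_num)
  exact hP.pow (fun ξ _ => by linarith [neg_one_le_erf ((ξ - 0.5 - lam) / √(2 * lam))]) K

theorem Pmd_pow_convex (lam : ℝ) (hlam : 0 < lam) (K : ℕ) (hK : 1 ≤ K) :
    ConvexOn ℝ (Set.Iic (lam + 0.5))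
      (fun ξ : ℝ => ((1 / 2) * (1 + erf ((ξ - 0.5 - lam) / Real.sqrt (2 * lam)))) ^ K) :=
  Pmd_pow_convex_general lam hlam K
end

section
/- Let U > 0, V₀ > 0, V₁ > 0 with V₁ ≥ V₀, let K ≥ 1 be an integer, and define Λ(x,λ) = erf((x-0.5-λ)/√(2λ)). Define g(ξ_R) = (1/4)[2 + (1+Λ(ξ_R,U))Λ(ξ_FC,V₀) + (1-Λ(ξ_R,U))Λ(ξ_FC,V₁)] for a fixed ξ_FC satisfying ξ_FC + V₀ > 0.5 and ξ_FC + V₁ > 0.5 (so that Λ(ξ_FC,V₁) ≤ Λ(ξ_FC,V₀)). Then ξ_R ↦ g(ξ_R)^K is convex on the set {ξ_R : ξ_R ≤ U + 0.5}. -/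
/-- The Gaussian (continuity-corrected) approximation of the Poisson CDF. -/
noncomputable def Lam (x lam : ℝ) : ℝ := erf ((x - 0.5 - lam) / Real.sqrt (2 * lam))

noncomputable def Ierf (z : ℝ) : ℝ := ∫ t in (0:ℝ)..z, Real.exp (-t ^ 2)

lemma cont_integrand : Continuous fun t : ℝ => Real.exp (-t ^ 2) := by continuity

lemma hasDerivAt_Ierf (z : ℝ) : HasDerivAt Ierf (Real.exp (-z ^ 2)) z :=
  (cont_integrand.integral_hasStrictDerivAt 0 z).hasDerivAt

lemma hasDerivAt_erf (z : ℝ) :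
    HasDerivAt erf ((2 / Real.sqrt Real.pi) * Real.exp (-z ^ 2)) z := by
  have := (hasDerivAt_Ierf z).const_mul (2 / Real.sqrt Real.pi)
  exact this

lemma deriv_erf (z : ℝ) : deriv erf z = (2 / Real.sqrt Real.pi) * Real.exp (-z ^ 2) :=
  (hasDerivAt_erf z).deriv

lemma erf_diff : Differentiable ℝ erf := fun z => (hasDerivAt_erf z).differentiableAt

lemma erf_mono : Monotone erf :=
  monotone_of_deriv_nonneg erf_diff (fun x => by rw [deriv_erf]; positivity)

lemma erf_convexOn : ConvexOn ℝ (Set.Iic 0) erf := by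
  apply MonotoneOn.convexOn_of_deriv (convex_Iic 0) erf_diff.continuous.continuousOn
    erf_diff.differentiableOn
  intro x hx y hy hxy
  rw [interior_Iic] at hx hy
  rw [deriv_erf, deriv_erf]
  have hx0 : x < 0 := hx
  have hy0 : y < 0 := hy
  have h : -x ^ 2 ≤ -y ^ 2 := by nlinarith
  have hs : (0:ℝ) ≤ 2 / Real.sqrt Real.pi := by positivity
  exact mul_le_mul_of_nonneg_left (Real.exp_le_exp.2 h) hs

lemma Ierf_le (z : ℝ) (hz : 0 ≤ z) : Ierf z ≤ Real.sqrt Real.pi / 2 := by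
  have hint : MeasureTheory.IntegrableOn (fun t : ℝ => Real.exp (-t ^ 2)) (Set.Ioi 0) := by
    have := (integrable_exp_neg_mul_sq (one_pos)).integrableOn (s := Set.Ioi 0)
    simpa using this
  have h1 : Ierf z = ∫ t in Set.Ioc 0 z, Real.exp (-t ^ 2) :=
    intervalIntegral.integral_of_le hz
  have h2 : (∫ t in Set.Ioc 0 z, Real.exp (-t ^ 2)) ≤ ∫ t in Set.Ioi 0, Real.exp (-t ^ 2) := by
    apply MeasureTheory.setIntegral_mono_set hint
    · filter_upwards with t using (Real.exp_pos _).le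
    · filter_upwards with t ht using ht.1
  have h3 : (∫ t in Set.Ioi 0, Real.exp (-t ^ 2)) = Real.sqrt Real.pi / 2 := by
    have := integral_gaussian_Ioi 1
    simpa using this
  rw [h1]; rw [h3] at h2; exact h2

lemma Ierf_nonneg (z : ℝ) (hz : 0 ≤ z) : 0 ≤ Ierf z :=
  intervalIntegral.integral_nonneg hz (fun t _ => (Real.exp_pos _).le)

lemma Ierf_neg (z : ℝ) : Ierf (-z) = -Ierf z := by
  have h := intervalIntegral.integral_comp_neg (a := (0:ℝ)) (b := z)
    (fun t => Real.exp (-t ^ 2))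
  simp only [neg_sq, neg_zero] at h
  have h3 : Ierf (-z) = -∫ x in (-z)..(0:ℝ), Real.exp (-x ^ 2) := by
    rw [Ierf, intervalIntegral.integral_symm]
  rw [h3, ← h]
  rfl

lemma abs_Ierf_le (z : ℝ) : |Ierf z| ≤ Real.sqrt Real.pi / 2 := by
  rcases le_or_gt 0 z with hz | hz
  · rw [abs_of_nonneg (Ierf_nonneg z hz)]; exact Ierf_le z hz
  · have h := Ierf_neg z
    have hz' : 0 ≤ -z := by linarith
    have := Ierf_le (-z) hz'
    have hnn := Ierf_nonneg (-z) hz'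
    rw [h] at this hnn
    rw [abs_of_nonpos (by linarith)]
    linarith

lemma abs_erf_le (z : ℝ) : |erf z| ≤ 1 := by
  have hpi : 0 < Real.sqrt Real.pi := Real.sqrt_pos.2 Real.pi_pos
  have h : erf z = (2 / Real.sqrt Real.pi) * Ierf z := rfl
  rw [h, abs_mul, abs_of_nonneg (by positivity : (0:ℝ) ≤ 2 / Real.sqrt Real.pi)]
  calc 2 / Real.sqrt Real.pi * |Ierf z|
      ≤ 2 / Real.sqrt Real.pi * (Real.sqrt Real.pi / 2) :=
        mul_le_mul_of_nonneg_left (abs_Ierf_le z) (by positivity)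
    _ = 1 := by field_simp

lemma lam_convexOn (lam : ℝ) (hlam : 0 < lam) :
    ConvexOn ℝ (Set.Iic (lam + 0.5)) (fun x => Lam x lam) := by
  have hs : 0 < Real.sqrt (2 * lam) := Real.sqrt_pos.2 (by linarith)
  refine ⟨convex_Iic _, fun x hx y hy a b ha hb hab => ?_⟩
  simp only [Set.mem_Iic] at hx hy
  simp only [Lam, smul_eq_mul]
  have hx' : (x - 0.5 - lam) / Real.sqrt (2 * lam) ∈ Set.Iic (0:ℝ) :=
    div_nonpos_iff.2 (Or.inr ⟨by linarith, hs.le⟩)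
  have hy' : (y - 0.5 - lam) / Real.sqrt (2 * lam) ∈ Set.Iic (0:ℝ) :=
    div_nonpos_iff.2 (Or.inr ⟨by linarith, hs.le⟩)
  have key : (a * x + b * y - 0.5 - lam) / Real.sqrt (2 * lam) =
      a * ((x - 0.5 - lam) / Real.sqrt (2 * lam)) +
      b * ((y - 0.5 - lam) / Real.sqrt (2 * lam)) := by
    have hnum : a * x + b * y - 0.5 - lam = a * (x - 0.5 - lam) + b * (y - 0.5 - lam) := by
      linear_combination ((0.5:ℝ) + lam) * hab
    rw [hnum, add_div, mul_div_assoc, mul_div_assoc]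
  rw [key]
  have := erf_convexOn.2 hx' hy' ha hb hab
  simpa [smul_eq_mul] using this

theorem Pmd_tilde_pow_convex (U V₀ V₁ ξFC : ℝ) (hU : 0 < U) (hV₀ : 0 < V₀) (hV₁ : 0 < V₁)
    (hV : V₀ ≤ V₁) (h₀ : ξFC + V₀ > 0.5) (h₁ : ξFC + V₁ > 0.5) (K : ℕ) (hK : 1 ≤ K) :
    ConvexOn ℝ (Set.Iic (U + 0.5))
      (fun ξR : ℝ => ((1 / 4) * (2 + (1 + Lam ξR U) * Lam ξFC V₀ +
        (1 - Lam ξR U) * Lam ξFC V₁)) ^ K) := by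
  set A := Lam ξFC V₀ with hA
  set B := Lam ξFC V₁ with hB
  -- A ≥ B
  have hs₀ : 0 < Real.sqrt (2 * V₀) := Real.sqrt_pos.2 (by linarith)
  have hs₁ : 0 < Real.sqrt (2 * V₁) := Real.sqrt_pos.2 (by linarith)
  have hs₀sq : Real.sqrt (2 * V₀) ^ 2 = 2 * V₀ := Real.sq_sqrt (by linarith)
  have hs₁sq : Real.sqrt (2 * V₁) ^ 2 = 2 * V₁ := Real.sq_sqrt (by linarith)
  have hs01 : Real.sqrt (2 * V₀) ≤ Real.sqrt (2 * V₁) :=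
    Real.sqrt_le_sqrt (by linarith)
  have hBA : B ≤ A := by
    apply erf_mono
    rw [div_le_div_iff₀ hs₁ hs₀]
    set s₀ := Real.sqrt (2 * V₀)
    set s₁ := Real.sqrt (2 * V₁)
    have hmid : 0 ≤ ξFC - 0.5 + s₀ * s₁ / 2 := by nlinarith
    nlinarith [mul_nonneg (sub_nonneg.2 hs01) hmid]
  -- bounds
  have habsA : |A| ≤ 1 := abs_erf_le _
  have habsB : |B| ≤ 1 := abs_erf_le _
  have hA1 : -1 ≤ A := neg_le_of_abs_le habsA
  have hB1 : -1 ≤ B := neg_le_of_abs_le habsB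
  -- convexity of the base function
  have hL := lam_convexOn U hU
  have hg : ConvexOn ℝ (Set.Iic (U + 0.5))
      (fun ξR : ℝ => (1 / 4) * (2 + (1 + Lam ξR U) * A + (1 - Lam ξR U) * B)) := by
    have hc : (0:ℝ) ≤ (A - B) / 4 := by linarith
    have h1 := (hL.smul hc).add (convexOn_const ((2 + A + B) / 4) (convex_Iic (U + 0.5)))
    suffices e : (fun ξR : ℝ => (1 / 4) * (2 + (1 + Lam ξR U) * A + (1 - Lam ξR U) * B)) =
        ((fun x => ((A - B) / 4) • Lam x U) + fun x => (2 + A + B) / 4) by rw [e]; exact h1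
    funext x
    simp only [smul_eq_mul, Pi.add_apply, Pi.smul_apply]
    ring
  have hgnn : ∀ ⦃x⦄, x ∈ Set.Iic (U + 0.5) →
      0 ≤ (1 / 4) * (2 + (1 + Lam x U) * A + (1 - Lam x U) * B) := by
    intro x _
    have hLx : |Lam x U| ≤ 1 := abs_erf_le _
    have h1 : 0 ≤ 1 + Lam x U := by linarith [neg_le_of_abs_le hLx]
    have h2 : 0 ≤ 1 - Lam x U := by linarith [le_of_abs_le hLx]
    nlinarith [mul_nonneg h1 (by linarith : (0:ℝ) ≤ A + 1),
      mul_nonneg h2 (by linarith : (0:ℝ) ≤ B + 1)]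
  exact hg.pow hgnn K
end
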